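/- Let J ≥ 1 be an integer and P a non-atomic Borel probability measure on C([0,1]) such that P-almost every curve is non-constant. Then the maps x ↦ D_J(x, P) and x ↦ D̄_J(x, P) are continuous on (C([0,1]), ‖·‖_∞). -/

import Mathlib

open MeasureTheory Filter Topology
open scoped ENNReal

noncomputable section

abbrev I01 : Set ℝ := Set.Icc 0 1

abbrev CI := C(I01, ℝ)

noncomputable instance : MeasurableSpace CI := borel CI
instance : BorelSpace CI := ⟨rfl⟩

/-- The graph of a continuous function on `[0,1]`, as a subset of `ℝ²`. -/
def graph (x : CI) : Set (ℝ × ℝ) := Set.range fun t : I01 => ((t : ℝ), x t)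

/-- The area (2-dimensional Lebesgue measure) of the convex hull of a set in `ℝ²`. -/
def ach (A : Set (ℝ × ℝ)) : ℝ := (volume (convexHull ℝ A)).toReal

/-- Ratio of the area of the convex hull of the graphs of a batch of curves to the area of
the convex hull once `x` is added (`0/0 = 0` convention, as division by zero is zero). -/
def achRatio {m : ℕ} (xs : Fin m → CI) (x : CI) : ℝ :=
  ach (⋃ i, graph (xs i)) / ach ((⋃ i, graph (xs i)) ∪ graph x)

/-- The ACH depth of degree `J` of `x` w.r.t. `P`. -/
def ACHDepth (J : ℕ) (P : Measure CI) (x : CI) : ℝ :=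
  ∫ xs, achRatio xs x ∂(Measure.pi fun _ : Fin J => P)

/-- The average ACH depth of degree `J`. -/
def avgACHDepth (J : ℕ) (P : Measure CI) (x : CI) : ℝ :=
  (J : ℝ)⁻¹ * ∑ j ∈ Finset.Icc 1 J, ACHDepth j P x

/-- A curve is non-constant. -/
def Nonconstant (x : CI) : Prop := ¬ ∃ c : ℝ, ∀ t, x t = c

/-- The empirical ACH depth (`U`-statistic of degree `J`) based on the first `n` curves. -/
def empDepth (J n : ℕ) (X : ℕ → CI) (x : CI) : ℝ :=
  (n.choose J : ℝ)⁻¹ * ∑ s ∈ Finset.powersetCard J (Finset.range n),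
    ach (⋃ i ∈ s, graph (X i)) / ach ((⋃ i ∈ s, graph (X i)) ∪ graph x)

/-- The average empirical ACH depth. -/
def avgEmpDepth (J n : ℕ) (X : ℕ → CI) (x : CI) : ℝ :=
  (J : ℝ)⁻¹ * ∑ j ∈ Finset.Icc 1 J, empDepth j n X x

/-- The band delimited by a finite family of curves. -/
def band {m : ℕ} (xs : Fin m → CI) : Set (ℝ × ℝ) :=
  {p | ∃ t : I01, p.1 = (t : ℝ) ∧ (⨅ i, xs i t) ≤ p.2 ∧ p.2 ≤ ⨆ i, xs i t}

/-! The ratio inside the expectation lies in `[0, 1]`, so by dominated convergence it suffices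
that it is continuous in `x` for every fixed batch of curves. If the hull of the batch has zero
area the ratio vanishes identically; otherwise its denominator stays positive, and everything
reduces to the continuity of the area of a convex hull under perturbations of the set that are
small in Hausdorff distance. The upper bound comes from the continuity of the measure of
`ε`-thickenings. For the lower bound, if a ball `B(p, r)` lies in `conv A` and `A` lies in the
`ε`-thickening of `K`, a separating functional shows that the homothety about `p` with ratio
`1 - ε / r` maps `conv A` into the closure of `conv K`. -/

open Metric Bornology Module

section ConvexHullVolume

variable {E : Type*} [NormedAddCommGroup E] [NormedSpace ℝ E]

lemma le_add_norm_mul_of_mem_cthickening (f : StrongDual ℝ E) {L : Set E} {u ε : ℝ}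
    (hf : ∀ l ∈ L, f l ≤ u) (hε : 0 ≤ ε) {y : E} (hy : y ∈ cthickening ε L) :
    f y ≤ u + ‖f‖ * ε := by
  have hthick : ∀ δ > ε, f y ≤ u + ‖f‖ * δ := by
    intro δ hδ
    obtain ⟨l, hl, hyl⟩ := mem_thickening_iff.mp
      (cthickening_subset_thickening' (hε.trans_lt hδ) hδ L hy)
    calc f y = f l + f (y - l) := by rw [map_sub, add_sub_cancel]
      _ ≤ u + ‖f‖ * ‖y - l‖ := add_le_add (hf l hl) ((Real.le_norm_self _).trans (f.le_opNorm _))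
      _ ≤ u + ‖f‖ * δ := by rw [← dist_eq_norm]; gcongr
  refine ge_of_tendsto (x := 𝓝[>] ε) ?_
    (eventually_nhdsWithin_of_forall fun δ (hδ : ε < δ) => hthick δ hδ)
  exact ((continuous_const.add (continuous_const.mul continuous_id)).tendsto' ε _ rfl).mono_left
    nhdsWithin_le_nhds

lemma lineMap_mem_of_closedBall_subset_cthickening {L : Set E} (hLc : Convex ℝ L)
    (hLcl : IsClosed L) {p q : E} {r ε : ℝ} (hr : 0 < r) (hε : 0 ≤ ε) (hεr : ε ≤ r)
    (hp : closedBall p r ⊆ cthickening ε L) (hq : q ∈ cthickening ε L) :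
    AffineMap.lineMap p q (1 - ε / r) ∈ L := by
  by_contra hmem
  obtain ⟨f, u, hfL, hfu⟩ := geometric_hahn_banach_closed_point hLc hLcl hmem
  have hthick : ∀ y ∈ cthickening ε L, f y ≤ u + ‖f‖ * ε :=
    fun y hy => le_add_norm_mul_of_mem_cthickening f (fun l hl => (hfL l hl).le) hε hy
  have hnorm : ‖f‖ ≤ (u + ‖f‖ * ε - f p) / r := by
    refine f.opNorm_bound_of_ball_bound hr _ fun z hz => ?_
    have hz' : ‖z‖ ≤ r := mem_closedBall_zero_iff.mp hz
    have hplus := hthick (p + z) (hp (by simpa [dist_eq_norm] using hz'))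
    have hminus := hthick (p - z) (hp (by simpa [dist_eq_norm] using hz'))
    rw [map_add] at hplus
    rw [map_sub] at hminus
    rw [Real.norm_eq_abs, abs_le]
    constructor <;> linarith
  have hfp : f p + ‖f‖ * r ≤ u + ‖f‖ * ε := by
    rw [le_div_iff₀ hr] at hnorm
    linarith
  have hfq := hthick q hq
  have hs : 0 ≤ ε / r := div_nonneg hε hr.le
  have hs' : 0 ≤ 1 - ε / r := by rw [sub_nonneg, div_le_one hr]; exact hεr
  have hsr : ‖f‖ * (ε / r * r) = ‖f‖ * ε := by rw [div_mul_cancel₀ ε hr.ne']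
  have hval : f (AffineMap.lineMap p q (1 - ε / r)) = ε / r * f p + (1 - ε / r) * f q := by
    rw [AffineMap.lineMap_apply_module, map_add, map_smul, map_smul, smul_eq_mul, smul_eq_mul,
      sub_sub_cancel]
  linarith [mul_le_mul_of_nonneg_left hfp hs, mul_le_mul_of_nonneg_left hfq hs']

lemma convexHull_subset_cthickening_convexHull {A B : Set E} {ε : ℝ}
    (h : B ⊆ cthickening ε A) : convexHull ℝ B ⊆ cthickening ε (convexHull ℝ A) :=
  convexHull_min (h.trans (cthickening_subset_of_subset ε (subset_convexHull ℝ A)))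
    ((convex_convexHull ℝ A).cthickening ε)

variable [FiniteDimensional ℝ E] [MeasurableSpace E] [BorelSpace E] (μ : Measure E)
  [μ.IsAddHaarMeasure]

lemma Convex.addHaar_closure {s : Set E} (hs : Convex ℝ s) : μ (closure s) = μ s :=
  measure_closure_of_null_frontier (hs.addHaar_frontier μ)

lemma ofReal_pow_mul_addHaar_convexHull_le {A K : Set E} {p : E} {r ε : ℝ} (hr : 0 < r)
    (hε : 0 ≤ ε) (hεr : ε ≤ r) (hp : closedBall p r ⊆ convexHull ℝ A)
    (hAK : A ⊆ cthickening ε K) :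
    ENNReal.ofReal ((1 - ε / r) ^ finrank ℝ E) * μ (convexHull ℝ A) ≤ μ (convexHull ℝ K) := by
  have hA : convexHull ℝ A ⊆ cthickening ε (closure (convexHull ℝ K)) := by
    rw [cthickening_closure]
    exact convexHull_subset_cthickening_convexHull hAK
  have himage : AffineMap.homothety p (1 - ε / r) '' convexHull ℝ A ⊆
      closure (convexHull ℝ K) := by
    rintro _ ⟨q, hq, rfl⟩
    rw [AffineMap.homothety_eq_lineMap]
    exact lineMap_mem_of_closedBall_subset_cthickening (convex_convexHull ℝ K).closure
      isClosed_closure hr hε hεr (hp.trans hA) (hA hq)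
  have hs' : 0 ≤ 1 - ε / r := by rw [sub_nonneg, div_le_one hr]; exact hεr
  calc ENNReal.ofReal ((1 - ε / r) ^ finrank ℝ E) * μ (convexHull ℝ A)
      = μ (AffineMap.homothety p (1 - ε / r) '' convexHull ℝ A) := by
        rw [Measure.addHaar_image_homothety, abs_of_nonneg (pow_nonneg hs' _)]
    _ ≤ μ (closure (convexHull ℝ K)) := measure_mono himage
    _ = μ (convexHull ℝ K) := (convex_convexHull ℝ K).addHaar_closure μ

theorem tendsto_addHaar_convexHull {ι : Type*} {l : Filter ι} {K : ι → Set E} {A : Set E}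
    (hA : IsBounded A) {ε : ι → ℝ} (hε0 : ∀ i, 0 ≤ ε i) (hε : Tendsto ε l (𝓝 0))
    (hKA : ∀ i, K i ⊆ cthickening (ε i) A) (hAK : ∀ i, A ⊆ cthickening (ε i) (K i)) :
    Tendsto (fun i => μ (convexHull ℝ (K i))) l (𝓝 (μ (convexHull ℝ A))) := by
  have hupper : Tendsto (fun i => μ (cthickening (ε i) (convexHull ℝ A))) l
      (𝓝 (μ (convexHull ℝ A))) := by
    have := tendsto_measure_cthickening (μ := μ) (s := convexHull ℝ A)
      ⟨1, one_pos, (isBounded_convexHull.2 hA).cthickening.measure_lt_top.ne⟩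
    rw [(convex_convexHull ℝ A).addHaar_closure μ] at this
    exact this.comp hε
  have hlower : ∃ g : ι → ℝ≥0∞, Tendsto g l (𝓝 (μ (convexHull ℝ A))) ∧
      ∀ᶠ i in l, g i ≤ μ (convexHull ℝ (K i)) := by
    rcases eq_or_ne (μ (convexHull ℝ A)) 0 with h0 | h0
    · exact ⟨0, h0 ▸ tendsto_const_nhds, Eventually.of_forall fun _ => zero_le⟩
    obtain ⟨p, hp⟩ : (interior (convexHull ℝ A)).Nonempty := by
      refine nonempty_of_measure_ne_zero (μ := μ) ?_
      rwa [measure_interior_of_null_frontier ((convex_convexHull ℝ A).addHaar_frontier μ)]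
    obtain ⟨r, hr, hball⟩ := nhds_basis_closedBall.mem_iff.mp (mem_interior_iff_mem_nhds.mp hp)
    refine ⟨fun i => ENNReal.ofReal ((1 - ε i / r) ^ finrank ℝ E) * μ (convexHull ℝ A), ?_,
      (hε.eventually (ge_mem_nhds hr)).mono fun i hi =>
        ofReal_pow_mul_addHaar_convexHull_le μ hr (hε0 i) hi hball (hAK i)⟩
    have hratio : Tendsto (fun i => ENNReal.ofReal ((1 - ε i / r) ^ finrank ℝ E)) l (𝓝 1) := by
      simpa using ENNReal.tendsto_ofReal (((hε.div_const r).const_sub 1).pow (finrank ℝ E))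
    simpa using ENNReal.Tendsto.mul_const hratio (Or.inl one_ne_zero)
  obtain ⟨g, hg, hgK⟩ := hlower
  exact tendsto_of_tendsto_of_tendsto_of_le_of_le' hg hupper hgK (Eventually.of_forall fun i =>
    measure_mono (convexHull_subset_cthickening_convexHull (hKA i)))

end ConvexHullVolume

theorem tendsto_ach {ι : Type*} {l : Filter ι} {K : ι → Set (ℝ × ℝ)} {A : Set (ℝ × ℝ)}
    (hA : IsBounded A) {ε : ι → ℝ} (hε0 : ∀ i, 0 ≤ ε i) (hε : Tendsto ε l (𝓝 0))
    (hKA : ∀ i, K i ⊆ cthickening (ε i) A) (hAK : ∀ i, A ⊆ cthickening (ε i) (K i)) :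
    Tendsto (fun i => ach (K i)) l (𝓝 (ach A)) :=
  (ENNReal.tendsto_toReal (isBounded_convexHull.2 hA).measure_lt_top.ne).comp
    (tendsto_addHaar_convexHull volume hA hε0 hε hKA hAK)

lemma ach_mono {A B : Set (ℝ × ℝ)} (hB : IsBounded B) (h : A ⊆ B) : ach A ≤ ach B :=
  ENNReal.toReal_mono (isBounded_convexHull.2 hB).measure_lt_top.ne
    (measure_mono (convexHull_mono h))

lemma isCompact_graph (x : CI) : IsCompact (graph x) :=
  isCompact_range (continuous_subtype_val.prodMk x.continuous)

lemma graph_subset_cthickening {x y : CI} {δ : ℝ} (h : dist x y ≤ δ) :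
    graph x ⊆ cthickening δ (graph y) := by
  rintro _ ⟨t, rfl⟩
  refine mem_cthickening_of_dist_le _ ((t : ℝ), y t) δ _ ⟨t, rfl⟩ ?_
  have ht : dist (x t) (y t) ≤ δ := (ContinuousMap.dist_apply_le_dist t).trans h
  simpa [Prod.dist_eq] using ht

section Graphs

variable {ι : Type*}

lemma iUnion_graph_subset_cthickening {xs ys : ι → CI} {δ : ℝ}
    (h : ∀ i, dist (xs i) (ys i) ≤ δ) :
    ⋃ i, graph (xs i) ⊆ cthickening δ (⋃ i, graph (ys i)) :=
  Set.iUnion_subset fun i => (graph_subset_cthickening (h i)).trans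
    (cthickening_subset_of_subset δ (Set.subset_iUnion (fun j => graph (ys j)) i))

lemma iUnion_graph_union_graph (xs : ι → CI) (x : CI) :
    (⋃ i, graph (xs i)) ∪ graph x = ⋃ o : Option ι, graph (o.elim x xs) := by
  rw [Set.iUnion_option, Set.union_comm]
  rfl

variable [Fintype ι]

lemma isBounded_iUnion_graph (xs : ι → CI) : IsBounded (⋃ i, graph (xs i)) :=
  (isCompact_iUnion fun i => isCompact_graph (xs i)).isBounded

theorem continuous_ach_iUnion_graph : Continuous fun xs : ι → CI => ach (⋃ i, graph (xs i)) := by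
  refine continuous_iff_continuousAt.2 fun ys => ?_
  refine tendsto_ach (ε := fun xs => dist xs ys) (isBounded_iUnion_graph ys)
    (fun _ => dist_nonneg) ?_
    (fun xs => iUnion_graph_subset_cthickening fun i => dist_le_pi_dist xs ys i)
    (fun xs => iUnion_graph_subset_cthickening fun i => (dist_le_pi_dist ys xs i).trans_eq
      (dist_comm ys xs))
  simpa using (tendsto_id (x := 𝓝 ys)).dist (tendsto_const_nhds (x := ys))

theorem continuous_ach_iUnion_graph_union_graph :
    Continuous fun p : (ι → CI) × CI => ach ((⋃ i, graph (p.1 i)) ∪ graph p.2) := by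
  simp_rw [iUnion_graph_union_graph]
  exact continuous_ach_iUnion_graph.comp (continuous_pi fun o => by
    cases o
    exacts [continuous_snd, (continuous_apply _).comp continuous_fst])

end Graphs

lemma ach_nonneg (A : Set (ℝ × ℝ)) : 0 ≤ ach A :=
  ENNReal.toReal_nonneg

lemma achRatio_nonneg {m : ℕ} (xs : Fin m → CI) (x : CI) : 0 ≤ achRatio xs x :=
  div_nonneg (ach_nonneg _) (ach_nonneg _)

lemma ach_iUnion_graph_le {m : ℕ} (xs : Fin m → CI) (x : CI) :
    ach (⋃ i, graph (xs i)) ≤ ach ((⋃ i, graph (xs i)) ∪ graph x) :=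
  ach_mono ((isBounded_iUnion_graph xs).union (isCompact_graph x).isBounded)
    Set.subset_union_left

lemma achRatio_le_one {m : ℕ} (xs : Fin m → CI) (x : CI) : achRatio xs x ≤ 1 :=
  div_le_one_of_le₀ (ach_iUnion_graph_le xs x) (ach_nonneg _)

theorem continuous_achRatio {m : ℕ} (xs : Fin m → CI) : Continuous (achRatio xs) := by
  rcases (ach_nonneg (⋃ i, graph (xs i))).eq_or_lt with h0 | hpos
  · have hzero : achRatio xs = fun _ => 0 := funext fun x => by rw [achRatio, ← h0, zero_div]
    rw [hzero]
    exact continuous_const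
  · exact continuous_const.div
      (continuous_ach_iUnion_graph_union_graph.comp (Continuous.prodMk_right xs) :)
      fun x => (hpos.trans_le (ach_iUnion_graph_le xs x)).ne'

theorem measurable_achRatio {m : ℕ} (x : CI) :
    Measurable fun xs : Fin m → CI => achRatio xs x :=
  continuous_ach_iUnion_graph.measurable.div
    ((continuous_ach_iUnion_graph_union_graph (ι := Fin m)).comp
      (Continuous.prodMk_left x) :).measurable

theorem continuous_ACHDepth (J : ℕ) (P : Measure CI) [IsFiniteMeasure P] :
    Continuous (ACHDepth J P) :=
  continuous_of_dominated (fun x => (measurable_achRatio x).aestronglyMeasurable)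
    (fun x => ae_of_all _ fun xs => by
      rw [Real.norm_of_nonneg (achRatio_nonneg xs x)]
      exact achRatio_le_one xs x)
    (integrable_const 1) (ae_of_all _ continuous_achRatio)

theorem ach_depth_continuous_general (J : ℕ)
    (P : Measure CI) [IsProbabilityMeasure P] :
    Continuous (fun x : CI => ACHDepth J P x) ∧
    Continuous (fun x : CI => avgACHDepth J P x) :=
  ⟨continuous_ACHDepth J P,
    continuous_const.mul (continuous_finsetSum _ fun j _ => continuous_ACHDepth j P)⟩

/-- continuity in `x` of the (average) ACH depth, for a non-atomic probability
measure `P` on `C([0,1])` such that `P`-almost every curve is non-constant. -/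
theorem ach_depth_continuous (J : ℕ) (hJ : 1 ≤ J)
    (P : Measure CI) [IsProbabilityMeasure P] [NullSingletonClass P]
    (hP : ∀ᵐ f ∂P, Nonconstant f) :
    Continuous (fun x : CI => ACHDepth J P x) ∧
    Continuous (fun x : CI => avgACHDepth J P x) :=
  ach_depth_continuous_general J P

end
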